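/- arXiv:1903.02497 — 2 statements merged into one kernel-verified Lean document; each statement's English description precedes it below -/
import Mathlib

section
/- (Algebraic core of Proposition 1.9(ii), first half.) Let Z be a type with a multiplicative action of ℂˣ, let τ : Z → Z be compatible with the action, and set ρ := N ∘ τ. If s : ℂˣ → Z is ρ-real, then its twist s̃ is again ρ-real: ρ(s̃(λ)) = s̃((conj λ)⁻¹) for all λ ∈ ℂˣ. -/
/-- The involution `N`, given by the action of `-1 ∈ ℂˣ`. -/
noncomputable def Nmap {Z : Type*} [MulAction ℂˣ Z] (z : Z) : Z := (-1 : ℂˣ) • z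

/-- The twist of a map `s : ℂˣ → Z`, `λ ↦ λ⁻¹ • s (λ²)`. -/
noncomputable def twist {Z : Type*} [MulAction ℂˣ Z] (s : ℂˣ → Z) : ℂˣ → Z :=
  fun lam => lam⁻¹ • s (lam ^ 2)

/-- (Algebraic core of Proposition 1.9(ii), first half.) If `τ` is compatible
with the `ℂˣ`-action, `ρ := N ∘ τ`, and `s` is `ρ`-real, then the twist `s̃`
is again `ρ`-real: `ρ(s̃(λ)) = s̃((conj λ)⁻¹)` for all `λ`. -/
theorem twist_rho_real {Z : Type*} [MulAction ℂˣ Z] (τ : Z → Z)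
    (hτ : ∀ (t : ℂˣ) (z : Z), τ (t • z) = (star t)⁻¹ • τ z)
    (s : ℂˣ → Z)
    (hs : ∀ lam : ℂˣ, (Nmap ∘ τ) (s lam) = s ((star lam)⁻¹)) :
    ∀ lam : ℂˣ, (Nmap ∘ τ) (twist s lam) = twist s ((star lam)⁻¹) := by
  intro lam
  have h1 : (Nmap ∘ τ) (twist s lam)
      = (star lam) • ((Nmap ∘ τ) (s (lam ^ 2))) := by
    simp only [Function.comp, twist, Nmap, hτ, star_inv, inv_inv, smul_smul]
    rw [mul_comm]
  rw [h1, hs]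
  simp only [twist, inv_inv, star_pow, ← inv_pow]
end

section
/- (Algebraic core of Proposition 1.9(ii), second half.) Let Z be a type with a multiplicative action of ℂˣ, let τ : Z → Z be compatible with the action, and set ρ := N ∘ τ. If s : ℂˣ → Z is ρ-real, then its twist s̃ is τ-real: τ(s̃(λ)) = s̃(−(conj λ)⁻¹) for all λ ∈ ℂˣ. -/
/-- (Algebraic core of Proposition 1.9(ii), second half.) If `τ` is compatible
with the `ℂˣ`-action, `ρ := N ∘ τ`, and `s` is `ρ`-real, then the twist `s̃`
is `τ`-real: `τ(s̃(λ)) = s̃(-(conj λ)⁻¹)` for all `λ`. -/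
theorem twist_tau_real {Z : Type*} [MulAction ℂˣ Z] (τ : Z → Z)
    (hτ : ∀ (t : ℂˣ) (z : Z), τ (t • z) = (star t)⁻¹ • τ z)
    (s : ℂˣ → Z)
    (hs : ∀ lam : ℂˣ, (Nmap ∘ τ) (s lam) = s ((star lam)⁻¹)) :
    ∀ lam : ℂˣ, τ (twist s lam) = twist s (-(star lam)⁻¹) := by
  intro lam
  have h1 : τ (s (lam ^ 2)) = (-1 : ℂˣ) • s ((star (lam ^ 2))⁻¹) := by
    have := hs (lam ^ 2)
    simp only [Function.comp, Nmap] at this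
    rw [← this, ← mul_smul]
    norm_num
  simp only [twist, hτ, h1, ← mul_smul]
  congr 1
  · ext
    push_cast
    ring_nf
    simp [mul_comm]
  · congr 1
    ext
    simp [star_pow, inv_pow]
end
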